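/- Let ‖x‖_* = max_{1≤i≤M} |⟨x, v_i⟩| be a polyhedral norm on ℝ^d, E ⊆ ℝ^d, α > 0, and G ⊂ ℝ^d countable. Then there exist k ≤ d and F ⊆ E with packing dimension of F equal to that of E such that: (1) whenever F ∩ ⋂_{ℓ=1}^M C(z_ℓ, v_{i_ℓ}) ≠ ∅ for some z₁,…,z_M ∈ G, the span of {v_{i₁},…,v_{i_M}} has dimension at most k; and (2) there exist z₁,…,z_k ∈ G and v_{i₁},…,v_{i_k} spanning a k-dimensional space with packing dimension of F ∩ ⋂_{ℓ=1}^k C(z_ℓ, v_{i_ℓ}) at least (packing dimension of E) − α. -/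

import Mathlib

/-!
Choose `k` minimal such that some `F ⊆ E` with `pdim F = pdim E` meets only cone intersections
whose directions span at most `k` dimensions (`k = d` works). If no intersection of `k` cones with
vertices in `G` and independent directions met `F` in packing dimension `≥ pdim E - α`, delete
these countably many intersections from `F`. By countable stability the packing dimension does not
drop, and since every `M` directions of rank `k` contain `k` directions with the same span, all
intersections meeting what is left have rank `< k`, contradicting minimality.

With `pdim` defined as an infimum, monotonicity and countable stability need the infimum to be
over a nonempty set (`sInf ∅ = 0`); in `ℝ^d` this holds because balls have upper box dimension at
most `d`.
-/

open Filter Set Metric Bornology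

/-- Minimal number of δ-balls needed to cover `E`. -/
noncomputable def coveringNumber {X : Type*} [PseudoMetricSpace X] (E : Set X) (δ : ℝ) : ℕ :=
  sInf {n : ℕ | ∃ s : Finset X, s.card = n ∧ E ⊆ ⋃ x ∈ s, Metric.ball x δ}

/-- Upper box dimension: limsup of log N(E,δ) / (-log δ) as δ → 0⁺. -/
noncomputable def ubdim {X : Type*} [PseudoMetricSpace X] (E : Set X) : ℝ :=
  Filter.limsup (fun δ : ℝ => Real.log (coveringNumber E δ) / (-Real.log δ))
    (nhdsWithin 0 (Set.Ioi 0))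

/-- Packing dimension via countable covers by bounded sets. -/
noncomputable def pdim {X : Type*} [PseudoMetricSpace X] (E : Set X) : ℝ :=
  sInf {a : ℝ | ∃ C : ℕ → Set X, (E ⊆ ⋃ i, C i) ∧ (∀ i, IsBounded (C i)) ∧
    ∀ i, ubdim (C i) ≤ a}

open scoped Topology

section PackingDimension

variable {X : Type*} [PseudoMetricSpace X]

/-- `pdim E` is the infimum of this set. -/
def pdimBounds (E : Set X) : Set ℝ :=
  {a | ∃ C : ℕ → Set X, (E ⊆ ⋃ i, C i) ∧ (∀ i, IsBounded (C i)) ∧ ∀ i, ubdim (C i) ≤ a}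

lemma coveringNumber_le_card {E : Set X} {δ : ℝ} {s : Finset X}
    (h : E ⊆ ⋃ x ∈ s, ball x δ) : coveringNumber E δ ≤ s.card :=
  Nat.sInf_le ⟨s, rfl, h⟩

lemma eventually_log_coveringNumber_div_nonneg (E : Set X) :
    ∀ᶠ δ in 𝓝[>] (0 : ℝ), 0 ≤ Real.log (coveringNumber E δ) / -Real.log δ := by
  filter_upwards [Ioo_mem_nhdsGT one_pos] with δ hδ
  exact div_nonneg (Real.log_natCast_nonneg _) (neg_nonneg.2 (Real.log_nonpos hδ.1.le hδ.2.le))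

lemma ubdim_nonneg (E : Set X) : 0 ≤ ubdim E := by
  rw [ubdim, limsup_eq]
  refine Real.sInf_nonneg fun a ha => ?_
  obtain ⟨δ, hδ, hδa⟩ := ((eventually_log_coveringNumber_div_nonneg E).and ha).exists
  exact hδ.trans hδa

lemma ubdim_le_of_coveringNumber_le {E : Set X} {s C : ℝ} (hs : 0 ≤ s) (hC : 1 ≤ C)
    (h : ∀ᶠ δ in 𝓝[>] (0 : ℝ), (coveringNumber E δ : ℝ) ≤ (C / δ) ^ s) : ubdim E ≤ s := by
  have hlim : Tendsto (fun δ : ℝ => s + s * Real.log C / -Real.log δ) (𝓝[>] 0) (𝓝 s) := by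
    simpa using tendsto_const_nhds.add (tendsto_const_nhds.div_atTop
      (tendsto_neg_atBot_atTop.comp Real.tendsto_log_nhdsGT_zero))
  rw [ubdim, ← hlim.limsup_eq]
  refine limsup_le_limsup ?_
    (isBoundedUnder_of_eventually_ge (eventually_log_coveringNumber_div_nonneg E)
      |>.isCoboundedUnder_le) hlim.isBoundedUnder_le
  filter_upwards [h, Ioo_mem_nhdsGT one_pos] with δ hN ⟨hδ0, hδ1⟩
  have hlogδ : 0 < -Real.log δ := neg_pos.2 (Real.log_neg hδ0 hδ1)
  have hCδ : 1 ≤ C / δ := (one_le_div hδ0).2 (hδ1.le.trans hC)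
  have hlogN : Real.log (coveringNumber E δ) ≤ s * (Real.log C - Real.log δ) := by
    rw [← Real.log_div (by positivity) hδ0.ne', ← Real.log_rpow (by positivity)]
    rcases Nat.eq_zero_or_pos (coveringNumber E δ) with h0 | hpos
    · rw [h0, Nat.cast_zero, Real.log_zero]
      exact Real.log_nonneg (Real.one_le_rpow hCδ hs)
    · exact Real.log_le_log (by exact_mod_cast hpos) hN
  calc Real.log (coveringNumber E δ) / -Real.log δ
      ≤ s * (Real.log C - Real.log δ) / -Real.log δ := by gcongr
    _ = s + s * Real.log C / -Real.log δ := by field_simp [(Real.log_neg hδ0 hδ1).ne]; ring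

lemma bddBelow_pdimBounds (E : Set X) : BddBelow (pdimBounds E) :=
  ⟨0, fun _ ⟨C, _, _, hC⟩ => (ubdim_nonneg (C 0)).trans (hC 0)⟩

lemma pdimBounds_anti {A B : Set X} (h : A ⊆ B) : pdimBounds B ⊆ pdimBounds A :=
  fun _ ⟨C, hB, hC⟩ => ⟨C, h.trans hB, hC⟩

lemma pdim_mono {A B : Set X} (h : A ⊆ B) (hB : (pdimBounds B).Nonempty) : pdim A ≤ pdim B :=
  csInf_le_csInf (bddBelow_pdimBounds A) hB (pdimBounds_anti h)

lemma pdim_iUnion_le {B : ℕ → Set X} (hB : ∀ n, (pdimBounds (B n)).Nonempty) {a : ℝ}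
    (h : ∀ n, pdim (B n) ≤ a) : pdim (⋃ n, B n) ≤ a := by
  refine le_of_forall_pos_le_add fun ε hε => ?_
  have hcover : ∀ n, ∃ C : ℕ → Set X, (B n ⊆ ⋃ i, C i) ∧ (∀ i, IsBounded (C i)) ∧
      ∀ i, ubdim (C i) ≤ a + ε := by
    intro n
    obtain ⟨b, ⟨C, hBC, hC, hCb⟩, hb⟩ :=
      (csInf_lt_iff (bddBelow_pdimBounds _) (hB n)).1 ((h n).trans_lt (lt_add_of_pos_right a hε))
    exact ⟨C, hBC, hC, fun i => (hCb i).trans hb.le⟩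
  choose C hBC hC hCa using hcover
  refine csInf_le (bddBelow_pdimBounds _)
    ⟨fun m => C m.unpair.1 m.unpair.2, ?_, fun _ => hC _ _, fun _ => hCa _ _⟩
  refine iUnion_subset fun n x hx => ?_
  obtain ⟨i, hi⟩ := mem_iUnion.1 (hBC n hx)
  exact mem_iUnion.2 ⟨Nat.pair n i, by simpa only [Nat.unpair_pair] using hi⟩

lemma pdim_sUnion_le {S : Set (Set X)} (hS : S.Countable) (hne : S.Nonempty)
    (hB : ∀ A ∈ S, (pdimBounds A).Nonempty) {a : ℝ} (h : ∀ A ∈ S, pdim A ≤ a) :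
    pdim (⋃₀ S) ≤ a := by
  obtain ⟨B, rfl⟩ := hS.exists_eq_range hne
  rw [sUnion_range]
  exact pdim_iUnion_le (fun n => hB _ ⟨n, rfl⟩) fun n => h _ ⟨n, rfl⟩

lemma pdim_diff_sUnion_eq {F : Set X} (hF : (pdimBounds F).Nonempty) {S : Set (Set X)}
    (hS : S.Countable) {b : ℝ} (hb : b < pdim F) (h : ∀ A ∈ S, pdim (F ∩ A) ≤ b) :
    pdim (F \ ⋃₀ S) = pdim F := by
  refine le_antisymm (pdim_mono sdiff_subset hF) ?_
  set S' := insert (F \ ⋃₀ S) ((F ∩ ·) '' S)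
  have hS'F : ∀ A ∈ S', A ⊆ F := by
    rintro A (rfl | ⟨B, -, rfl⟩)
    exacts [sdiff_subset, inter_subset_left]
  have hFS' : F ⊆ ⋃₀ S' := by
    intro x hx
    by_cases hxS : x ∈ ⋃₀ S
    · obtain ⟨B, hB, hxB⟩ := hxS
      exact ⟨F ∩ B, mem_insert_of_mem _ ⟨B, hB, rfl⟩, hx, hxB⟩
    · exact ⟨_, mem_insert _ _, hx, hxS⟩
  have hle : pdim F ≤ max (pdim (F \ ⋃₀ S)) b := by
    refine (pdim_mono hFS' ?_).trans (pdim_sUnion_le ((hS.image _).insert _) (insert_nonempty _ _)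
      (fun A hA => hF.mono (pdimBounds_anti (hS'F A hA))) ?_)
    · exact hF.mono (pdimBounds_anti (sUnion_subset hS'F))
    · rintro A (rfl | ⟨B, hB, rfl⟩)
      exacts [le_max_left _ _, (h B hB).trans (le_max_right _ _)]
  exact (le_max_iff.1 hle).resolve_right hb.not_ge

end PackingDimension

section Euclidean

variable {d : ℕ}

lemma floor_mem_Icc_of_abs_le {a : ℝ} {N : ℕ} (h : |a| ≤ N) :
    ⌊a⌋ ∈ Finset.Icc (-(N : ℤ)) N := by
  obtain ⟨h₁, h₂⟩ := abs_le.1 h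
  refine Finset.mem_Icc.2 ⟨Int.le_floor.2 (by exact_mod_cast h₁), ?_⟩
  exact_mod_cast (Int.floor_le a).trans h₂

lemma ball_subset_iUnion_grid {r t δ : ℝ} (ht : 0 < t) (htδ : √d * t < δ) :
    ball (0 : EuclideanSpace ℝ (Fin d)) r ⊆
      ⋃ m ∈ Fintype.piFinset fun _ : Fin d => Finset.Icc (-(⌈r / t⌉₊ : ℤ)) ⌈r / t⌉₊,
        ball (WithLp.toLp 2 fun j => t * m j) δ := by
  intro x hx
  have hxr : ‖x‖ < r := mem_ball_zero_iff.1 hx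
  refine mem_iUnion₂.2 ⟨fun j => ⌊x j / t⌋, Fintype.mem_piFinset.2 fun j => ?_, ?_⟩
  · refine floor_mem_Icc_of_abs_le ?_
    rw [abs_div, abs_of_pos ht]
    refine le_trans ?_ (Nat.le_ceil _)
    gcongr
    exact (PiLp.norm_apply_le x j).trans hxr.le
  · have hcoord : ∀ j, dist (x j) (t * ⌊x j / t⌋) ^ 2 ≤ t ^ 2 := fun j => by
      rw [Real.dist_eq, mul_comm, sq_le_sq₀ (abs_nonneg _) ht.le,
        abs_of_nonneg (Int.sub_floor_div_mul_nonneg _ ht)]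
      exact (Int.sub_floor_div_mul_lt _ ht).le
    rw [mem_ball, EuclideanSpace.dist_eq]
    calc √(∑ j, dist (x j) (t * ⌊x j / t⌋) ^ 2) ≤ √(d * t ^ 2) := by
          gcongr
          exact (Finset.sum_le_card_nsmul _ _ _ fun j _ => hcoord j).trans_eq (by simp)
      _ = √d * t := by rw [Real.sqrt_mul (Nat.cast_nonneg d), Real.sqrt_sq ht.le]
      _ < δ := htδ

lemma coveringNumber_ball_le {r t δ : ℝ} (ht : 0 < t) (htδ : √d * t < δ) :
    coveringNumber (ball (0 : EuclideanSpace ℝ (Fin d)) r) δ ≤ (2 * ⌈r / t⌉₊ + 1) ^ d := by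
  classical
  set N := ⌈r / t⌉₊
  calc coveringNumber (ball (0 : EuclideanSpace ℝ (Fin d)) r) δ
      ≤ ((Fintype.piFinset fun _ : Fin d => Finset.Icc (-(N : ℤ)) N).image
          fun m => WithLp.toLp 2 fun j => t * (m j : ℝ)).card := by
        refine coveringNumber_le_card ?_
        rw [Finset.set_biUnion_finset_image]
        exact ball_subset_iUnion_grid ht htδ
    _ ≤ (Fintype.piFinset fun _ : Fin d => Finset.Icc (-(N : ℤ)) N).card := Finset.card_image_le
    _ = (2 * N + 1) ^ d := by
        rw [Fintype.card_piFinset, Finset.prod_const, Finset.card_univ, Fintype.card_fin,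
          Int.card_Icc]
        congr 1
        omega

lemma ubdim_ball_le {r : ℝ} (hr : 0 ≤ r) : ubdim (ball (0 : EuclideanSpace ℝ (Fin d)) r) ≤ d := by
  have hsd : 0 ≤ √(d : ℝ) := Real.sqrt_nonneg _
  refine ubdim_le_of_coveringNumber_le (C := 2 * r * (√d + 1) + 3) (Nat.cast_nonneg d)
    (by nlinarith) ?_
  filter_upwards [Ioo_mem_nhdsGT one_pos] with δ ⟨hδ0, hδ1⟩
  set t := δ / (√d + 1)
  have ht : 0 < t := by positivity
  have htδ : √d * t < δ := by
    rw [mul_div_assoc', div_lt_iff₀ (by positivity)]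
    nlinarith
  have hgrid : (2 * ⌈r / t⌉₊ + 1 : ℝ) ≤ (2 * r * (√d + 1) + 3) / δ := by
    have hrt : r / t = r * (√d + 1) / δ := div_div_eq_mul_div _ _ _
    have hceil := Nat.ceil_lt_add_one (div_nonneg hr ht.le)
    have h3 : (3 : ℝ) ≤ 3 / δ := by rw [le_div_iff₀ hδ0]; linarith
    calc (2 * ⌈r / t⌉₊ + 1 : ℝ) ≤ 2 * (r * (√d + 1) / δ) + 3 / δ := by rw [← hrt]; linarith
      _ = (2 * r * (√d + 1) + 3) / δ := by ring
  rw [Real.rpow_natCast]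
  calc (coveringNumber (ball (0 : EuclideanSpace ℝ (Fin d)) r) δ : ℝ)
      ≤ ((2 * ⌈r / t⌉₊ + 1) ^ d : ℕ) := by exact_mod_cast coveringNumber_ball_le ht htδ
    _ ≤ _ := by push_cast; gcongr

lemma natCast_mem_pdimBounds (E : Set (EuclideanSpace ℝ (Fin d))) : (d : ℝ) ∈ pdimBounds E := by
  refine ⟨fun n => ball 0 n, fun x _ => ?_, fun _ => isBounded_ball,
    fun n => ubdim_ball_le n.cast_nonneg⟩
  obtain ⟨n, hn⟩ := exists_nat_gt ‖x‖
  exact mem_iUnion.2 ⟨n, mem_ball_zero_iff.2 hn⟩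

end Euclidean

lemma exists_fin_comp_span_eq {K V ι : Type*} [DivisionRing K] [AddCommGroup V] [Module K V]
    [Finite ι] (w : ι → V) {k : ℕ} (hk : Module.finrank K (Submodule.span K (range w)) = k) :
    ∃ j : Fin k → ι, Submodule.span K (range (w ∘ j)) = Submodule.span K (range w) := by
  obtain ⟨κ, a, ha, hspan, hli⟩ := exists_linearIndependent' K w
  have : Finite κ := Finite.of_injective a ha
  have : Fintype κ := Fintype.ofFinite κ
  have hcard : Fintype.card κ = k := by
    rw [← hk, ← hspan, finrank_span_eq_card hli]
  let e := (Fintype.equivFinOfCardEq hcard).symm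
  refine ⟨a ∘ e, ?_⟩
  rw [← Function.comp_assoc, e.surjective.range_comp, hspan]

section Cones

variable {V : Type*} [NormedAddCommGroup V] [InnerProductSpace ℝ V]

/-- The cone `C(x, w)` of the paper, for the norm `ν`. -/
def cone (ν : V → ℝ) (x w : V) : Set V := {y | ν (x - y) = |(inner ℝ (x - y) w : ℝ)|}

variable {M : ℕ} (v : Fin M → V) (ν : V → ℝ) (G : Set V)

def ConeRankLE (F : Set V) (k : ℕ) : Prop :=
  ∀ z : Fin M → V, (∀ ℓ, z ℓ ∈ G) → ∀ i : Fin M → Fin M,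
    (F ∩ ⋂ ℓ, cone ν (z ℓ) (v (i ℓ))).Nonempty →
      Module.finrank ℝ (Submodule.span ℝ (range fun ℓ => v (i ℓ))) ≤ k

variable {v ν G}

lemma coneRankLE_of_finrank_le [FiniteDimensional ℝ V] (F : Set V) {k : ℕ}
    (hk : Module.finrank ℝ V ≤ k) : ConeRankLE v ν G F k :=
  fun _ _ _ _ => (Submodule.finrank_le _).trans hk

lemma ConeRankLE.exists_pred {F : Set V} {k : ℕ} (hF : ConeRankLE v ν G F (k + 1))
    (hFb : (pdimBounds F).Nonempty) (hG : G.Countable) {b : ℝ} (hb : b < pdim F)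
    (hsmall : ∀ z : Fin (k + 1) → V, (∀ ℓ, z ℓ ∈ G) → ∀ i : Fin (k + 1) → Fin M,
      Module.finrank ℝ (Submodule.span ℝ (range fun ℓ => v (i ℓ))) = k + 1 →
        pdim (F ∩ ⋂ ℓ, cone ν (z ℓ) (v (i ℓ))) ≤ b) :
    ∃ F' ⊆ F, pdim F' = pdim F ∧ ConeRankLE v ν G F' k := by
  set S := (fun p : (Fin (k + 1) → V) × (Fin (k + 1) → Fin M) =>
      ⋂ ℓ, cone ν (p.1 ℓ) (v (p.2 ℓ))) ''
    (univ.pi (fun _ => G) ×ˢ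
      {i | Module.finrank ℝ (Submodule.span ℝ (range fun ℓ => v (i ℓ))) = k + 1})
  have hS : S.Countable := ((countable_univ_pi fun _ => hG).prod (toFinite _).countable).image _
  refine ⟨F \ ⋃₀ S, sdiff_subset, pdim_diff_sUnion_eq hFb hS hb ?_, ?_⟩
  · rintro _ ⟨⟨z, i⟩, ⟨hz, hi⟩, rfl⟩
    exact hsmall z (fun ℓ => hz ℓ trivial) i hi
  · intro z hz i ⟨y, ⟨hyF, hyS⟩, hy⟩
    refine Nat.le_of_lt_succ <| (hF z hz i ⟨y, hyF, hy⟩).lt_of_ne fun hrank => hyS ?_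
    obtain ⟨j, hj⟩ := exists_fin_comp_span_eq _ hrank
    refine ⟨_, ⟨(z ∘ j, i ∘ j), ⟨fun ℓ _ => hz (j ℓ), ?_⟩, rfl⟩,
      mem_iInter.2 fun ℓ => mem_iInter.1 hy (j ℓ)⟩
    exact (congrArg (fun W : Submodule ℝ V => Module.finrank ℝ W) hj).trans hrank

end Cones

theorem stmt9_general {d M : ℕ} (v : Fin M → EuclideanSpace ℝ (Fin d))
    (ν : EuclideanSpace ℝ (Fin d) → ℝ)
    (E : Set (EuclideanSpace ℝ (Fin d))) (α : ℝ) (hα : 0 < α)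
    (G : Set (EuclideanSpace ℝ (Fin d))) (hG : G.Countable) :
    ∃ k ≤ d, ∃ F ⊆ E, pdim F = pdim E ∧
      (∀ z : Fin M → EuclideanSpace ℝ (Fin d), (∀ ℓ, z ℓ ∈ G) →
        ∀ i : Fin M → Fin M,
          (F ∩ ⋂ ℓ, {y | ν (z ℓ - y) = |(inner ℝ (z ℓ - y) (v (i ℓ)) : ℝ)|}).Nonempty →
          Module.finrank ℝ ↥(Submodule.span ℝ (Set.range fun ℓ => v (i ℓ))) ≤ k) ∧
      (∃ z : Fin k → EuclideanSpace ℝ (Fin d), (∀ ℓ, z ℓ ∈ G) ∧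
        ∃ i : Fin k → Fin M,
          Module.finrank ℝ ↥(Submodule.span ℝ (Set.range fun ℓ => v (i ℓ))) = k ∧
          pdim E - α ≤
            pdim (F ∩ ⋂ ℓ, {y | ν (z ℓ - y) = |(inner ℝ (z ℓ - y) (v (i ℓ)) : ℝ)|})) := by
  classical
  have hd : ∃ F ⊆ E, pdim F = pdim E ∧ ConeRankLE v ν G F d :=
    ⟨E, subset_rfl, rfl, coneRankLE_of_finrank_le E finrank_euclideanSpace_fin.le⟩
  have hk : ∃ k, ∃ F ⊆ E, pdim F = pdim E ∧ ConeRankLE v ν G F k := ⟨d, hd⟩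
  obtain ⟨F, hFE, hFdim, hFk⟩ := Nat.find_spec hk
  refine ⟨Nat.find hk, Nat.find_min' hk hd, F, hFE, hFdim, hFk, ?_⟩
  by_contra! hsmall
  cases hfind : Nat.find hk with
  | zero =>
    rw [hfind] at hsmall
    have h0 := hsmall Fin.elim0 (fun ℓ => ℓ.elim0) Fin.elim0 (by simp)
    rw [iInter_of_empty, inter_univ, hFdim] at h0
    linarith
  | succ k =>
    rw [hfind] at hFk hsmall
    obtain ⟨F', hF'F, hF'dim, hF'k⟩ := hFk.exists_pred ⟨d, natCast_mem_pdimBounds F⟩ hG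
      (b := pdim E - α) (by linarith) fun z hz i hi => (hsmall z hz i hi).le
    have := Nat.find_min' hk ⟨F', hF'F.trans hFE, hF'dim.trans hFdim, hF'k⟩
    omega

theorem stmt9 {d M : ℕ} (v : Fin M → EuclideanSpace ℝ (Fin d))
    (hspan : Submodule.span ℝ (Set.range v) = ⊤)
    (ν : EuclideanSpace ℝ (Fin d) → ℝ)
    (hν : ∀ x, ν x = ⨆ i, |(inner ℝ x (v i) : ℝ)|)
    (E : Set (EuclideanSpace ℝ (Fin d))) (α : ℝ) (hα : 0 < α)
    (G : Set (EuclideanSpace ℝ (Fin d))) (hG : G.Countable) :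
    ∃ k ≤ d, ∃ F ⊆ E, pdim F = pdim E ∧
      (∀ z : Fin M → EuclideanSpace ℝ (Fin d), (∀ ℓ, z ℓ ∈ G) →
        ∀ i : Fin M → Fin M,
          (F ∩ ⋂ ℓ, {y | ν (z ℓ - y) = |(inner ℝ (z ℓ - y) (v (i ℓ)) : ℝ)|}).Nonempty →
          Module.finrank ℝ ↥(Submodule.span ℝ (Set.range fun ℓ => v (i ℓ))) ≤ k) ∧
      (∃ z : Fin k → EuclideanSpace ℝ (Fin d), (∀ ℓ, z ℓ ∈ G) ∧
        ∃ i : Fin k → Fin M,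
          Module.finrank ℝ ↥(Submodule.span ℝ (Set.range fun ℓ => v (i ℓ))) = k ∧
          pdim E - α ≤
            pdim (F ∩ ⋂ ℓ, {y | ν (z ℓ - y) = |(inner ℝ (z ℓ - y) (v (i ℓ)) : ℝ)|})) :=
  stmt9_general v ν E α hα G hG
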